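/- Let Δ be a fan with exceptional ideal B(Δ) = (x^σ : σ ∈ Δ) in k[x_ρ : ρ ∈ Δ(1)], where x^σ = ∏_{ρ ∉ σ(1)} x_ρ. Then the irreducible components of Z(Δ) = V(B(Δ)) ⊆ 𝔸^{Δ(1)} are exactly the linear subspaces V((x_ρ)_{ρ ∈ C}) where C ranges over the primitive collections of Δ. -/

import Mathlib

open scoped Classical

/-- The convex cone generated by a set `S ⊆ ℝᵐ`. -/
def coneGen {m : ℕ} (S : Set (Fin m → ℝ)) : Set (Fin m → ℝ) :=
  {x | ∃ (t : Finset (Fin m → ℝ)) (c : (Fin m → ℝ) → ℝ),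
    ↑t ⊆ S ∧ (∀ y, 0 ≤ c y) ∧ x = ∑ y ∈ t, c y • y}

/-- `τ` is a face of the cone `σ`. -/
def IsFaceOf {m : ℕ} (τ σ : Set (Fin m → ℝ)) : Prop :=
  τ ⊆ σ ∧ (∀ x ∈ τ, ∀ y ∈ τ, x + y ∈ τ) ∧ (∀ x ∈ τ, ∀ c : ℝ, 0 ≤ c → c • x ∈ τ) ∧
    (∀ x ∈ σ, ∀ y ∈ σ, x + y ∈ τ → x ∈ τ ∧ y ∈ τ)

/-- The Zariski topology on affine space `𝔸^ι = (ι → k)`, generated by the complements of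
hypersurfaces. -/
def zariski (k ι : Type*) [CommRing k] : TopologicalSpace (ι → k) :=
  TopologicalSpace.generateFrom
    {U | ∃ p : MvPolynomial ι k, U = {x | MvPolynomial.eval x p ≠ 0}}

/-!
The proof is combinatorial: a point `x` lies in `Z(Δ)` exactly when its zero set
`{i | x i = 0}` is contained in no cone of `Δ`, and these "non-face" sets are closed upwards.
Hence `Z(Δ)` is the union of the coordinate subspaces `V(C)` over the minimal non-face sets `C`,
which are the primitive collections. Each `V(C)` is Zariski closed and irreducible (the image of
the irreducible affine space under a coordinate projection, `k` being infinite), and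
`V(C) ⊆ V(D) ↔ D ⊆ C`, so these subspaces are pairwise incomparable; a finite irredundant union of
closed irreducible sets has exactly these sets as its irreducible components.
-/

open MvPolynomial Set TopologicalSpace

theorem IsIrreducible.exists_mem_subset_of_subset_sUnion {X : Type*} [TopologicalSpace X]
    {S : Set (Set X)} {Y : Set X} (hY : IsIrreducible Y) (hS : S.Finite)
    (hcl : ∀ s ∈ S, IsClosed s) (hYS : Y ⊆ ⋃₀ S) : ∃ s ∈ S, Y ⊆ s := by
  simpa using isIrreducible_iff_sUnion_isClosed.1 hY hS.toFinset (by simpa using hcl)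
    (by simpa using hYS)

theorem maximal_isIrreducible_subset_sUnion_iff {X : Type*} [TopologicalSpace X]
    {S : Set (Set X)} (hS : S.Finite) (hcl : ∀ s ∈ S, IsClosed s)
    (hirr : ∀ s ∈ S, IsIrreducible s) (hanti : IsAntichain (· ⊆ ·) S) {Y : Set X} :
    Maximal (fun Y => Y ⊆ ⋃₀ S ∧ IsClosed Y ∧ IsIrreducible Y) Y ↔ Y ∈ S := by
  constructor
  · intro hY
    obtain ⟨s, hs, hYs⟩ := hY.prop.2.2.exists_mem_subset_of_subset_sUnion hS hcl hY.prop.1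
    rwa [hY.eq_of_subset ⟨subset_sUnion_of_mem hs, hcl s hs, hirr s hs⟩ hYs]
  · intro hY
    refine ⟨⟨subset_sUnion_of_mem hY, hcl Y hY, hirr Y hY⟩, fun Y' hY' hYY' => ?_⟩
    obtain ⟨s, hs, hY's⟩ := hY'.2.2.exists_mem_subset_of_subset_sUnion hS hcl hY'.1
    rwa [hanti.eq hY hs (hYY'.trans hY's)]

def coordSubspace (k : Type*) {ι : Type*} [Zero k] (C : Set ι) : Set (ι → k) :=
  {x | ∀ i ∈ C, x i = 0}

theorem coordSubspace_subset_coordSubspace_iff {k ι : Type*} [Zero k] [Nontrivial k]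
    {C D : Set ι} : coordSubspace k C ⊆ coordSubspace k D ↔ D ⊆ C := by
  refine ⟨fun h i hiD => ?_, fun h x hx i hi => hx i (h hi)⟩
  by_contra hiC
  obtain ⟨a, ha⟩ := exists_ne (0 : k)
  have hsingle : Pi.single i a ∈ coordSubspace k C := fun j hj => by
    simp [show j ≠ i by rintro rfl; exact hiC hj]
  exact ha (by simpa using h hsingle i hiD)

theorem setOf_zeroSet_mem_eq_sUnion_coordSubspace {k ι : Type*} [Zero k] [Finite ι]
    {N : Set (Set ι)} (hN : IsUpperSet N) :
    {x : ι → k | {i | x i = 0} ∈ N} = ⋃₀ (coordSubspace k '' {C | Minimal (· ∈ N) C}) := by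
  ext x
  simp only [mem_ofPred_eq, sUnion_image, mem_iUnion, exists_prop]
  constructor
  · intro hx
    obtain ⟨C, hCx, hC⟩ := exists_minimal_le_of_wellFoundedLT _ _ hx
    exact ⟨C, hC, fun i hi => hCx hi⟩
  · rintro ⟨C, hC, hxC⟩
    exact hN (fun i hi => hxC i hi) hC.prop

section Zariski

attribute [local instance] zariski

variable {k ι κ : Type*} [CommRing k]

theorem isTopologicalBasis_zariski [IsDomain k] :
    IsTopologicalBasis {U : Set (ι → k) | ∃ p : MvPolynomial ι k, U = {x | eval x p ≠ 0}} where
  exists_subset_inter := by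
    rintro _ ⟨p, rfl⟩ _ ⟨q, rfl⟩ x hx
    exact ⟨_, ⟨p * q, rfl⟩, by simpa using hx, fun y hy => by simpa using hy⟩
  sUnion_eq := sUnion_eq_univ_iff.2 fun x => ⟨_, ⟨1, rfl⟩, by simp⟩
  eq_generateFrom := rfl

theorem isOpen_zariski_eval_ne_zero (p : MvPolynomial ι k) :
    IsOpen {x : ι → k | eval x p ≠ 0} :=
  isOpen_generateFrom_of_mem ⟨p, rfl⟩

theorem isClosed_zariski_eval_eq_zero (p : MvPolynomial ι k) :
    IsClosed {x : ι → k | eval x p = 0} := by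
  rw [← isOpen_compl_iff, compl_ofPred]
  exact isOpen_zariski_eval_ne_zero p

theorem isClosed_coordSubspace (C : Set ι) : IsClosed (coordSubspace k C) := by
  have hC : coordSubspace k C = ⋂ i ∈ C, {x | eval x (X i) = 0} := by
    ext x; simp [coordSubspace]
  rw [hC]
  exact isClosed_biInter fun i _ => isClosed_zariski_eval_eq_zero _

theorem continuous_zariski_eval (g : ι → MvPolynomial κ k) :
    Continuous fun (x : κ → k) i => eval x (g i) := by
  refine continuous_generateFrom_iff.2 ?_
  rintro _ ⟨p, rfl⟩
  have heval : ∀ x, eval x (bind₁ g p) = eval (fun i => eval x (g i)) p := fun x =>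
    eval₂Hom_bind₁ _ _ _ _
  convert isOpen_zariski_eval_ne_zero (bind₁ g p) using 1
  ext x
  simp only [mem_preimage, mem_ofPred_eq, heval]

theorem isIrreducible_univ_zariski [IsDomain k] [Infinite k] :
    IsIrreducible (univ : Set (ι → k)) := by
  refine ⟨univ_nonempty, fun u v hu hv ⟨x, _, hxu⟩ ⟨y, _, hyv⟩ => ?_⟩
  obtain ⟨_, ⟨p, rfl⟩, hxp, hpu⟩ := isTopologicalBasis_zariski.exists_subset_of_mem_open hxu hu
  obtain ⟨_, ⟨q, rfl⟩, hyq, hqv⟩ := isTopologicalBasis_zariski.exists_subset_of_mem_open hyv hv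
  have hpq : p * q ≠ 0 := mul_ne_zero (by rintro rfl; simp at hxp) (by rintro rfl; simp at hyq)
  obtain ⟨z, hz⟩ : ∃ z, eval z (p * q) ≠ 0 := by
    by_contra! h
    exact hpq (MvPolynomial.funext fun z => by simpa using h z)
  rw [map_mul, mul_ne_zero_iff] at hz
  exact ⟨z, trivial, hpu hz.1, hqv hz.2⟩

theorem isIrreducible_coordSubspace [IsDomain k] [Infinite k] (C : Set ι) :
    IsIrreducible (coordSubspace k C) := by
  have hC : coordSubspace k C =
      (fun x i => eval x (if i ∈ C then 0 else X i)) '' (univ : Set (ι → k)) := by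
    ext y
    constructor
    · refine fun hy => ⟨y, trivial, funext fun i => ?_⟩
      by_cases hi : i ∈ C <;> simp [hi, hy i]
    · rintro ⟨x, -, rfl⟩ i hi
      simp [hi]
  rw [hC]
  exact isIrreducible_univ_zariski.image _ (continuous_zariski_eval _).continuousOn

theorem maximal_isIrreducible_subset_setOf_zeroSet_mem_iff [IsDomain k] [Infinite k] [Finite ι]
    {N : Set (Set ι)} (hN : IsUpperSet N) {Y : Set (ι → k)} :
    Maximal (fun Y => Y ⊆ {x | {i | x i = 0} ∈ N} ∧ IsClosed Y ∧ IsIrreducible Y) Y ↔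
      ∃ C, Minimal (· ∈ N) C ∧ Y = coordSubspace k C := by
  rw [setOf_zeroSet_mem_eq_sUnion_coordSubspace hN,
    maximal_isIrreducible_subset_sUnion_iff (toFinite _)
      (forall_mem_image.2 fun C _ => isClosed_coordSubspace C)
      (forall_mem_image.2 fun C _ => isIrreducible_coordSubspace C)
      ((setOfPred_minimal_antichain _).flip.image _
        fun _ _ h => coordSubspace_subset_coordSubspace_iff.1 h)]
  simp only [mem_image, mem_ofPred_eq, eq_comm]

end Zariski

theorem stmt_4_general {k : Type*} [Field k] [IsAlgClosed k] {m : ℕ}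
    {ι : Type*} [Fintype ι]
    (Δ : Set (Set (Fin m → ℝ)))
    (r : ι → (Fin m → ℝ))
    (Z : Set (ι → k))
    (hZ : Z = {x | ∀ σ ∈ Δ, (∏ i ∈ Finset.univ.filter (fun i => r i ∉ σ), x i) = 0}) :
    letI := zariski k ι
    {Y : Set (ι → k) | Y ⊆ Z ∧ IsClosed Y ∧ IsIrreducible Y ∧
        ∀ Y' : Set (ι → k), Y' ⊆ Z → IsClosed Y' → IsIrreducible Y' → Y ⊆ Y' → Y = Y'} =
      {Y | ∃ C : Set ι,
        (¬ ∃ σ ∈ Δ, ∀ i ∈ C, r i ∈ σ) ∧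
        (∀ D ⊂ C, ∃ σ ∈ Δ, ∀ i ∈ D, r i ∈ σ) ∧
        Y = {x : ι → k | ∀ i ∈ C, x i = 0}} := by
  let _ := zariski k ι
  set N : Set (Set ι) := {C | ¬ ∃ σ ∈ Δ, ∀ i ∈ C, r i ∈ σ}
  have hN : IsUpperSet N := fun C D hCD hC ⟨σ, hσ, hD⟩ => hC ⟨σ, hσ, fun i hi => hD i (hCD hi)⟩
  have hZN : Z = {x | {i | x i = 0} ∈ N} := by
    ext x
    simp [hZ, N, Finset.prod_eq_zero_iff, and_comm]
  have hprimitive : ∀ C, Minimal (· ∈ N) C ↔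
      (¬ ∃ σ ∈ Δ, ∀ i ∈ C, r i ∈ σ) ∧ ∀ D ⊂ C, ∃ σ ∈ Δ, ∀ i ∈ D, r i ∈ σ := by
    simp [minimal_iff_forall_lt, N]
  ext Y
  have hY := maximal_isIrreducible_subset_setOf_zeroSet_mem_iff (k := k) hN (Y := Y)
  simp only [maximal_iff, hprimitive, and_imp, and_assoc, ← hZN] at hY
  exact hY

/-- Let `Δ` be a fan with ray generators `r i`, `i ∈ ι = Δ(1)`, and
exceptional ideal `B(Δ) = (x^σ : σ ∈ Δ)` in `k[x_ρ : ρ ∈ Δ(1)]`, where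
`x^σ = ∏_{ρ ∉ σ(1)} x_ρ`.  Then the irreducible components of
`Z(Δ) = V(B(Δ)) ⊆ 𝔸^{Δ(1)}` (i.e. the maximal irreducible Zariski-closed subsets of
`Z(Δ)`) are exactly the linear subspaces `V((x_ρ)_{ρ ∈ C})` where `C` ranges over the
primitive collections of `Δ`: the sets of rays not contained in any single cone of `Δ`,
every proper subset of which is contained in some cone of `Δ`. -/
theorem stmt_4 {k : Type*} [Field k] [IsAlgClosed k] {m : ℕ}
    {ι : Type*} [Fintype ι] [DecidableEq ι]
    (Δ : Set (Set (Fin m → ℝ)))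
    (r : ι → (Fin m → ℝ)) (hr : Function.Injective r) (hr0 : ∀ i, r i ≠ 0)
    (hfaces : ∀ σ ∈ Δ, ∀ τ, IsFaceOf τ σ → τ ∈ Δ)
    (hcone : ∀ σ ∈ Δ, σ = coneGen (r '' {i | r i ∈ σ}))
    (Z : Set (ι → k))
    (hZ : Z = {x | ∀ σ ∈ Δ, (∏ i ∈ Finset.univ.filter (fun i => r i ∉ σ), x i) = 0}) :
    letI := zariski k ι
    {Y : Set (ι → k) | Y ⊆ Z ∧ IsClosed Y ∧ IsIrreducible Y ∧
        ∀ Y' : Set (ι → k), Y' ⊆ Z → IsClosed Y' → IsIrreducible Y' → Y ⊆ Y' → Y = Y'} =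
      {Y | ∃ C : Set ι,
        (¬ ∃ σ ∈ Δ, ∀ i ∈ C, r i ∈ σ) ∧
        (∀ D ⊂ C, ∃ σ ∈ Δ, ∀ i ∈ D, r i ∈ σ) ∧
        Y = {x : ι → k | ∀ i ∈ C, x i = 0}} :=
  stmt_4_general Δ r Z hZ
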